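/- arXiv:1112.5047 — 3 statements merged into one kernel-verified Lean document; each statement's English description precedes it below -/
import Mathlib

section
/- (Graph-theoretic half of the normality heredity) Suppose a: [d] → ℝ induces a decomposition of P_G (every positive edge and negative edge pair is cycle-compatible via zero edges). If both G_+ and G_- satisfy the odd cycle condition, then G satisfies the odd cycle condition. -/
/-- The odd cycle condition: any two vertex-disjoint odd cycles are joined by a bridge. -/
def OddCycleCondition {V : Type*} (G : SimpleGraph V) : Prop :=
  ∀ (u v : V) (C : G.Walk u u) (C' : G.Walk v v),
    C.IsCycle → C'.IsCycle → Odd C.length → Odd C'.length →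
    (∀ x ∈ C.support, x ∉ C'.support) →
    ∃ x y, x ∈ C.support ∧ y ∈ C'.support ∧ G.Adj x y

/-!
Let `C`, `C'` be disjoint odd cycles of `G`. If one of them has a positive edge and the other a
negative edge, the zero square through these two edges contains a bridge. Otherwise, after possibly
replacing `a` by `-a`, each of `C`, `C'` either lies in `G₊` or has a positive edge; in the latter
case every negative edge `kl` of it is replaced by the path `k p q l` around a zero square through
that positive edge, which keeps the parity and stays on the vertices of the cycle. This gives
disjoint odd closed walks in `G₊`, hence disjoint odd cycles, and the odd cycle condition of `G₊`
provides the bridge.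
-/

namespace SimpleGraph.Walk

variable {V : Type*} {G : SimpleGraph V}

theorem isCycle_of_odd_of_nodup_tail {u : V} (w : G.Walk u u) (hodd : Odd w.length)
    (hnd : w.support.tail.Nodup) : w.IsCycle := by
  cases w with
  | nil => simp at hodd
  | @cons _ v _ h p =>
    have hp : p.IsPath := (isPath_def p).2 hnd
    refine (cons_isCycle_iff p h).2 ⟨hp, fun huv => ?_⟩
    have : p.reverse.length = 1 :=
      hp.reverse.length_eq_one_of_mem_edges (by simpa [edges_reverse, Sym2.eq_swap] using huv)
    rw [length_cons, ← length_reverse, this] at hodd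
    exact absurd hodd (by decide)

theorem exists_split_of_one_lt_count [DecidableEq V] {x : V} (w : G.Walk x x)
    (hx : 1 < w.support.tail.count x) :
    ∃ c₁ c₂ : G.Walk x x, ¬c₁.Nil ∧ ¬c₂.Nil ∧ c₁.length + c₂.length = w.length ∧
      c₁.support ⊆ w.support ∧ c₂.support ⊆ w.support := by
  cases w with
  | nil => simp at hx
  | @cons _ y _ h p =>
    rw [support_cons, List.tail_cons] at hx
    have hxp : x ∈ p.support := List.count_pos_iff.1 (by omega)
    have hsplit := p.take_spec hxp
    refine ⟨cons h (p.takeUntil x hxp), p.dropUntil x hxp, not_nil_cons, fun hnil => ?_, ?_, ?_, ?_⟩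
    · rw [← hsplit, support_append, List.count_append, p.count_support_takeUntil_eq_one hxp,
        nil_iff_support_eq.1 hnil] at hx
      simp at hx
    · have hlen := congrArg length hsplit
      rw [length_append] at hlen
      simp only [length_cons]
      omega
    · rw [support_cons, support_cons]
      exact List.cons_subset_cons _ (p.support_takeUntil_subset_support hxp)
    · rw [support_cons]
      exact List.Subset.trans (p.support_dropUntil_subset_support hxp) (List.subset_cons_self _ _)

theorem exists_isCycle_odd_of_odd {u : V} (w : G.Walk u u) (hodd : Odd w.length) :
    ∃ (x : V) (c : G.Walk x x), c.IsCycle ∧ Odd c.length ∧ c.support ⊆ w.support := by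
  classical
  induction hn : w.length using Nat.strong_induction_on generalizing u with
  | _ n ih =>
    by_cases hnd : w.support.tail.Nodup
    · exact ⟨u, w, w.isCycle_of_odd_of_nodup_tail hodd hnd, hodd, List.Subset.refl _⟩
    obtain ⟨x, hx⟩ : ∃ x, 1 < w.support.tail.count x := by
      simpa [List.nodup_iff_count_le_one] using hnd
    have hxw : x ∈ w.support := List.mem_of_mem_tail (List.count_pos_iff.1 (by omega))
    have hrot : 1 < (w.rotate x hxw).support.tail.count x := by
      rwa [(support_rotate w x hxw).perm.count_eq]
    obtain ⟨c₁, c₂, hc₁, hc₂, hlen, hsub₁, hsub₂⟩ :=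
      (w.rotate x hxw).exists_split_of_one_lt_count hrot
    rw [length_rotate] at hlen
    have hsub : (w.rotate x hxw).support ⊆ w.support := fun z hz =>
      (mem_support_rotate_iff w x hxw).1 hz
    have hpos₁ := not_nil_iff_lt_length.1 hc₁
    have hpos₂ := not_nil_iff_lt_length.1 hc₂
    rcases Nat.even_or_odd c₁.length with heven | hodd₁
    · have hodd₂ : Odd c₂.length := (Nat.odd_add'.1 (hlen ▸ hodd)).2 heven
      obtain ⟨y, c, hc, hco, hcs⟩ := ih c₂.length (by omega) c₂ hodd₂ rfl
      exact ⟨y, c, hc, hco, List.Subset.trans hcs (List.Subset.trans hsub₂ hsub)⟩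
    · obtain ⟨y, c, hc, hco, hcs⟩ := ih c₁.length (by omega) c₁ hodd₁ rfl
      exact ⟨y, c, hc, hco, List.Subset.trans hcs (List.Subset.trans hsub₁ hsub)⟩

/-- `w.HasPosEdge (-a)` says that `w` has an edge of negative weight. -/
def HasPosEdge (a : V → ℝ) {u v : V} (w : G.Walk u v) : Prop :=
  ∃ i j, s(i, j) ∈ w.edges ∧ 0 < a i + a j

end SimpleGraph.Walk

theorem OddCycleCondition.exists_adj_of_odd {V : Type*} {H : SimpleGraph V}
    (hH : OddCycleCondition H) {u v : V} (w : H.Walk u u) (w' : H.Walk v v)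
    (hw : Odd w.length) (hw' : Odd w'.length) (hdisj : ∀ x ∈ w.support, x ∉ w'.support) :
    ∃ x y, x ∈ w.support ∧ y ∈ w'.support ∧ H.Adj x y := by
  obtain ⟨x, c, hc, hco, hcs⟩ := w.exists_isCycle_odd_of_odd hw
  obtain ⟨x', c', hc', hco', hcs'⟩ := w'.exists_isCycle_odd_of_odd hw'
  obtain ⟨y, y', hy, hy', hadj⟩ :=
    hH x x' c c' hc hc' hco hco' fun z hz hz' => hdisj z (hcs hz) (hcs' hz')
  exact ⟨y, y', hcs hy, hcs' hy', hadj⟩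

namespace SimpleGraph

variable {V : Type*} (G : SimpleGraph V) (a : V → ℝ)

/-- The graph `G₊` of the paper; `G₋` is `G.nonnegGraph (-a)`. -/
def nonnegGraph : SimpleGraph V :=
  SimpleGraph.fromRel fun i j => G.Adj i j ∧ 0 ≤ a i + a j

/-- The decomposition hypothesis: a positive edge `pq` and a negative edge `rs` lie on the
4-cycle `p q r s` whose edges `qr` and `sp` have weight zero. -/
def ZeroSquareCondition : Prop :=
  ∀ i j k l, G.Adj i j → G.Adj k l → 0 < a i + a j → a k + a l < 0 →
    ∃ p q r s : V, ({p, q} : Set V) = {i, j} ∧ ({r, s} : Set V) = {k, l} ∧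
      G.Adj q r ∧ G.Adj s p ∧ a q + a r = 0 ∧ a s + a p = 0

variable {G a}

theorem nonnegGraph_adj {i j : V} : (G.nonnegGraph a).Adj i j ↔ G.Adj i j ∧ 0 ≤ a i + a j := by
  rw [nonnegGraph, fromRel_adj]
  constructor
  · rintro ⟨-, h | ⟨h, hij⟩⟩
    · exact h
    · exact ⟨h.symm, by linarith⟩
  · rintro ⟨h, hij⟩
    exact ⟨h.ne, Or.inl ⟨h, hij⟩⟩

theorem nonnegGraph_le : G.nonnegGraph a ≤ G := fun _ _ h => (nonnegGraph_adj.1 h).1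

theorem nonnegGraph_neg :
    G.nonnegGraph (-a) = SimpleGraph.fromRel fun i j => G.Adj i j ∧ a i + a j ≤ 0 := by
  simp only [nonnegGraph, Pi.neg_apply, ← neg_add, neg_nonneg]

namespace ZeroSquareCondition

theorem neg (h : G.ZeroSquareCondition a) : G.ZeroSquareCondition (-a) := by
  intro i j k l hij hkl hpos hneg
  simp only [Pi.neg_apply] at hpos hneg ⊢
  obtain ⟨p, q, r, s, hpq, hrs, hqr, hsp, hqr0, hsp0⟩ :=
    h k l i j hkl hij (by linarith) (by linarith)
  exact ⟨s, r, q, p, by rw [Set.pair_comm, hrs], by rw [Set.pair_comm, hpq],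
    hqr.symm, hsp.symm, by linarith, by linarith⟩

theorem exists_square (h : G.ZeroSquareCondition a) {i j k l : V} (hij : G.Adj i j)
    (hkl : G.Adj k l) (hpos : 0 < a i + a j) (hneg : a k + a l < 0) :
    ∃ p q, (p = i ∧ q = j ∨ p = j ∧ q = i) ∧ G.Adj k p ∧ G.Adj q l ∧
      a k + a p = 0 ∧ a q + a l = 0 := by
  obtain ⟨p, q, r, s, hpq, hrs, hqr, hsp, hqr0, hsp0⟩ := h i j k l hij hkl hpos hneg
  rcases Set.pair_eq_pair_iff.1 hrs with ⟨rfl, rfl⟩ | ⟨rfl, rfl⟩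
  · exact ⟨q, p, (Set.pair_eq_pair_iff.1 (by rwa [Set.pair_comm])), hqr.symm, hsp.symm,
      by linarith, by linarith⟩
  · exact ⟨p, q, Set.pair_eq_pair_iff.1 hpq, hsp, hqr, by linarith, by linarith⟩

variable (h : G.ZeroSquareCondition a)
include h

theorem exists_adj_of_hasPosEdge {u u' v v' : V} {w : G.Walk u u'} {w' : G.Walk v v'}
    (hw : w.HasPosEdge a) (hw' : w'.HasPosEdge (-a)) :
    ∃ x y, x ∈ w.support ∧ y ∈ w'.support ∧ G.Adj x y := by
  obtain ⟨i, j, hij, hpos⟩ := hw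
  obtain ⟨k, l, hkl, hneg⟩ := hw'
  simp only [Pi.neg_apply] at hneg
  obtain ⟨p, q, hpq, hkp, -⟩ := h.exists_square (w.adj_of_mem_edges hij)
    (w'.adj_of_mem_edges hkl) hpos (by linarith)
  refine ⟨p, k, ?_, w'.fst_mem_support_of_mem_edges hkl, hkp.symm⟩
  rcases hpq with ⟨rfl, -⟩ | ⟨rfl, -⟩
  · exact w.fst_mem_support_of_mem_edges hij
  · exact w.snd_mem_support_of_mem_edges hij

theorem exists_nonnegGraph_detour {S : Set V} {i j k l : V} (hij : G.Adj i j)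
    (hpos : 0 < a i + a j) (hi : i ∈ S) (hj : j ∈ S) (hkl : G.Adj k l) (hneg : a k + a l < 0)
    (hk : k ∈ S) (hl : l ∈ S) :
    ∃ w : (G.nonnegGraph a).Walk k l, w.length = 3 ∧ ∀ z ∈ w.support, z ∈ S := by
  obtain ⟨p, q, hpq, hkp, hql, hkp0, hql0⟩ := h.exists_square hij hkl hpos hneg
  obtain ⟨hpq', hpq0, hpS, hqS⟩ : G.Adj p q ∧ 0 < a p + a q ∧ p ∈ S ∧ q ∈ S := by
    rcases hpq with ⟨rfl, rfl⟩ | ⟨rfl, rfl⟩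
    · exact ⟨hij, hpos, hi, hj⟩
    · exact ⟨hij.symm, by linarith, hj, hi⟩
  refine ⟨.cons (nonnegGraph_adj.2 ⟨hkp, hkp0.ge⟩) <|
    .cons (nonnegGraph_adj.2 ⟨hpq', hpq0.le⟩) <| .cons (nonnegGraph_adj.2 ⟨hql, hql0.ge⟩) .nil,
    rfl, ?_⟩
  simp only [Walk.support_cons, Walk.support_nil, List.mem_cons, List.not_mem_nil, or_false]
  rintro z (rfl | rfl | rfl | rfl) <;> assumption

theorem exists_nonnegGraph_walk {S : Set V} {i j : V} (hij : G.Adj i j) (hpos : 0 < a i + a j)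
    (hi : i ∈ S) (hj : j ∈ S) {x y : V} (w : G.Walk x y) (hw : ∀ z ∈ w.support, z ∈ S) :
    ∃ w' : (G.nonnegGraph a).Walk x y,
      w'.length % 2 = w.length % 2 ∧ ∀ z ∈ w'.support, z ∈ S := by
  induction w with
  | nil => exact ⟨.nil, rfl, hw⟩
  | @cons x y _ hxy p ih =>
    simp only [Walk.support_cons, List.mem_cons, forall_eq_or_imp] at hw
    obtain ⟨p', hlen, hp'⟩ := ih hw.2
    have hy : y ∈ S := hw.2 y p.start_mem_support
    by_cases hxy0 : 0 ≤ a x + a y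
    · refine ⟨.cons (nonnegGraph_adj.2 ⟨hxy, hxy0⟩) p', by simp only [Walk.length_cons]; omega,
        ?_⟩
      simpa [forall_eq_or_imp] using ⟨hw.1, hp'⟩
    · obtain ⟨d, hd, hdS⟩ :=
        h.exists_nonnegGraph_detour hij hpos hi hj hxy (not_le.1 hxy0) hw.1 hy
      refine ⟨d.append p', by simp only [Walk.length_append, Walk.length_cons, hd]; omega, ?_⟩
      simp only [Walk.mem_support_append_iff]
      rintro z (hz | hz)
      · exact hdS z hz
      · exact hp' z hz

theorem exists_odd_nonnegGraph_walk {u : V} (C : G.Walk u u) (hC : Odd C.length)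
    (hCa : C.HasPosEdge (-a) → C.HasPosEdge a) :
    ∃ (x : V) (w : (G.nonnegGraph a).Walk x x),
      Odd w.length ∧ ∀ z ∈ w.support, z ∈ C.support := by
  by_cases hneg : C.HasPosEdge (-a)
  · obtain ⟨i, j, hij, hpos⟩ := hCa hneg
    obtain ⟨w, hlen, hw⟩ := h.exists_nonnegGraph_walk (S := {z | z ∈ C.support})
      (C.adj_of_mem_edges hij) hpos (C.fst_mem_support_of_mem_edges hij)
      (C.snd_mem_support_of_mem_edges hij) C fun _ => id
    exact ⟨u, w, Nat.odd_iff.2 (hlen.trans (Nat.odd_iff.1 hC)), hw⟩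
  · have hnonneg : ∀ e ∈ C.edges, e ∈ (G.nonnegGraph a).edgeSet := by
      rintro ⟨k, l⟩ hkl
      refine nonnegGraph_adj.2 ⟨C.adj_of_mem_edges hkl, ?_⟩
      by_contra hkl0
      exact hneg ⟨k, l, hkl, by simp only [Pi.neg_apply]; linarith⟩
    exact ⟨u, C.transfer _ hnonneg, by rwa [Walk.length_transfer],
      by simp [Walk.support_transfer]⟩

theorem exists_adj_of_oddCycleCondition (hG : OddCycleCondition (G.nonnegGraph a)) {u v : V}
    {C : G.Walk u u} {C' : G.Walk v v} (hC : Odd C.length) (hC' : Odd C'.length)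
    (hdisj : ∀ x ∈ C.support, x ∉ C'.support)
    (hCa : C.HasPosEdge (-a) → C.HasPosEdge a) (hCa' : C'.HasPosEdge (-a) → C'.HasPosEdge a) :
    ∃ x y, x ∈ C.support ∧ y ∈ C'.support ∧ G.Adj x y := by
  obtain ⟨x, w, hw, hwC⟩ := h.exists_odd_nonnegGraph_walk C hC hCa
  obtain ⟨x', w', hw', hwC'⟩ := h.exists_odd_nonnegGraph_walk C' hC' hCa'
  obtain ⟨y, y', hy, hy', hadj⟩ :=
    hG.exists_adj_of_odd w w' hw hw' fun z hz hz' => hdisj z (hwC z hz) (hwC' z hz')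
  exact ⟨y, y', hwC y hy, hwC' y' hy', nonnegGraph_le hadj⟩

end ZeroSquareCondition

end SimpleGraph

theorem stmt15_general {d : ℕ} (G : SimpleGraph (Fin d)) (a : Fin d → ℝ)
    (hcomp : ∀ i j k l, G.Adj i j → G.Adj k l → 0 < a i + a j → a k + a l < 0 →
      ∃ p q r s : Fin d, ({p, q} : Set (Fin d)) = {i, j} ∧
        ({r, s} : Set (Fin d)) = {k, l} ∧
        G.Adj q r ∧ G.Adj s p ∧ a q + a r = 0 ∧ a s + a p = 0)
    (hp : OddCycleCondition (SimpleGraph.fromRel fun i j => G.Adj i j ∧ 0 ≤ a i + a j))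
    (hm : OddCycleCondition (SimpleGraph.fromRel fun i j => G.Adj i j ∧ a i + a j ≤ 0)) :
    OddCycleCondition G := by
  have h : G.ZeroSquareCondition a := hcomp
  have hm' : OddCycleCondition (G.nonnegGraph (-a)) := by rwa [SimpleGraph.nonnegGraph_neg]
  intro u v C C' _ _ hC hC' hdisj
  by_cases hPN : C.HasPosEdge a ∧ C'.HasPosEdge (-a)
  · exact h.exists_adj_of_hasPosEdge hPN.1 hPN.2
  by_cases hNP : C.HasPosEdge (-a) ∧ C'.HasPosEdge a
  · obtain ⟨y, x, hy, hx, hxy⟩ := h.exists_adj_of_hasPosEdge hNP.2 hNP.1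
    exact ⟨x, y, hx, hy, hxy.symm⟩
  by_cases hnonneg :
      (C.HasPosEdge (-a) → C.HasPosEdge a) ∧ (C'.HasPosEdge (-a) → C'.HasPosEdge a)
  · exact h.exists_adj_of_oddCycleCondition hp hC hC' hdisj hnonneg.1 hnonneg.2
  · refine h.neg.exists_adj_of_oddCycleCondition hm' hC hC' hdisj ?_ ?_ <;> rw [neg_neg] <;> tauto

/-- if a weighting induces a decomposition of P_G and both G_+ and G_-
satisfy the odd cycle condition, then so does G. -/
theorem stmt15 {d : ℕ} (G : SimpleGraph (Fin d)) (hG : G.Connected) (a : Fin d → ℝ)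
    (hpos : ∃ i j, G.Adj i j ∧ 0 < a i + a j)
    (hneg : ∃ i j, G.Adj i j ∧ a i + a j < 0)
    (hcomp : ∀ i j k l, G.Adj i j → G.Adj k l → 0 < a i + a j → a k + a l < 0 →
      ∃ p q r s : Fin d, ({p, q} : Set (Fin d)) = {i, j} ∧
        ({r, s} : Set (Fin d)) = {k, l} ∧
        G.Adj q r ∧ G.Adj s p ∧ a q + a r = 0 ∧ a s + a p = 0)
    (hp : OddCycleCondition (SimpleGraph.fromRel fun i j => G.Adj i j ∧ 0 ≤ a i + a j))
    (hm : OddCycleCondition (SimpleGraph.fromRel fun i j => G.Adj i j ∧ a i + a j ≤ 0)) :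
    OddCycleCondition G :=
  stmt15_general G a hcomp hp hm
end

section
/- (Other half of normality heredity) Suppose a: [d] → ℝ induces a decomposition of P_G as above. If G satisfies the odd cycle condition, then G_+ satisfies the odd cycle condition (and symmetrically so does G_-). Specifically: if C, C' are vertex-disjoint odd cycles of G_+ with no bridge in G_+, then all edges of C and C' are zero edges, forcing a_v = 0 for all vertices v of C and C' (since the cycles are odd), contradicting the existence of a negative bridge in G. -/
open SimpleGraph in
lemma walk_alt {V : Type*} {G : SimpleGraph V} (a : V → ℝ) {u v : V} (W : G.Walk u v)
    (h : ∀ i j, s(i,j) ∈ W.edges → a i + a j = 0) :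
    a v = (-1)^W.length * a u := by
  induction W with
  | nil => simp
  | @cons u b v huv p ih =>
    have hb : a u + a b = 0 := h u b (by simp)
    have := ih (fun i j hij => h i j (by simp [hij]))
    rw [Walk.length_cons, pow_succ, this]
    have hb' : a b = -a u := by linarith
    rw [hb']; ring

open SimpleGraph in
lemma cycle_zero {V : Type*} [DecidableEq V] {G : SimpleGraph V} (a : V → ℝ) {u : V}
    (C : G.Walk u u) (hodd : Odd C.length)
    (h : ∀ i j, s(i,j) ∈ C.edges → a i + a j = 0)
    {x : V} (hx : x ∈ C.support) : a x = 0 := by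
  have h1 : a x = (-1)^(C.takeUntil x hx).length * a u :=
    walk_alt a _ (fun i j hij => h i j (Walk.edges_takeUntil_subset C hx hij))
  have h2 : a u = (-1)^(C.dropUntil x hx).length * a x :=
    walk_alt a _ (fun i j hij => h i j (Walk.edges_dropUntil_subset C hx hij))
  have hlen : (C.takeUntil x hx).length + (C.dropUntil x hx).length = C.length := by
    rw [← Walk.length_append, Walk.take_spec]
  have hkey : a x = (-1)^C.length * a x := by
    rw [← hlen, pow_add]
    conv_lhs => rw [h1, h2]
    ring
  rw [hodd.neg_one_pow] at hkey
  linarith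

open SimpleGraph in
lemma key {d : ℕ} (G : SimpleGraph (Fin d)) (a : Fin d → ℝ)
    (hcomp : ∀ i j k l, G.Adj i j → G.Adj k l → 0 < a i + a j → a k + a l < 0 →
      ∃ p q r s : Fin d, ({p, q} : Set (Fin d)) = {i, j} ∧
        ({r, s} : Set (Fin d)) = {k, l} ∧
        G.Adj q r ∧ G.Adj s p ∧ a q + a r = 0 ∧ a s + a p = 0)
    (hG' : OddCycleCondition G) :
    OddCycleCondition (SimpleGraph.fromRel fun i j => G.Adj i j ∧ 0 ≤ a i + a j) := by
  set Gp := SimpleGraph.fromRel fun i j => G.Adj i j ∧ 0 ≤ a i + a j with hGp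
  have hle : Gp ≤ G := by
    intro i j hij
    rw [hGp, SimpleGraph.fromRel_adj] at hij
    rcases hij.2 with ⟨h1, _⟩ | ⟨h1, _⟩
    · exact h1
    · exact h1.symm
  have hadj : ∀ i j, Gp.Adj i j → G.Adj i j ∧ 0 ≤ a i + a j := by
    intro i j hij
    rw [hGp, SimpleGraph.fromRel_adj] at hij
    rcases hij.2 with ⟨h1, h2⟩ | ⟨h1, h2⟩
    · exact ⟨h1, h2⟩
    · exact ⟨h1.symm, by linarith⟩
  have hadj' : ∀ i j, G.Adj i j → a i + a j = 0 → Gp.Adj i j := by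
    intro i j hij hz
    rw [hGp, SimpleGraph.fromRel_adj]
    exact ⟨hij.ne, Or.inl ⟨hij, le_of_eq hz.symm⟩⟩
  intro u v C C' hC hC' hodd hodd' hdisj
  have hsup : ∀ {w : Fin d} (W : Gp.Walk w w), (W.mapLe hle).support = W.support := by
    intro w W
    rw [SimpleGraph.Walk.mapLe, SimpleGraph.Walk.support_map]
    exact List.map_congr_left (fun _ _ => rfl) |>.trans (List.map_id _)
  have hlen : ∀ {w : Fin d} (W : Gp.Walk w w), (W.mapLe hle).length = W.length := by
    intro w W
    simp [SimpleGraph.Walk.mapLe, SimpleGraph.Walk.length_map]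
  obtain ⟨x, y, hx, hy, hxy⟩ := hG' u v (C.mapLe hle) (C'.mapLe hle)
    (hC.mapLe hle) (hC'.mapLe hle) (by rwa [hlen]) (by rwa [hlen])
    (by rw [hsup]; intro z hz; rw [hsup]; exact hdisj z hz)
  rw [hsup] at hx hy
  by_cases hb : 0 ≤ a x + a y
  · exact ⟨x, y, hx, hy, by
      rw [hGp, SimpleGraph.fromRel_adj]
      exact ⟨fun h => hdisj x hx (h ▸ hy), Or.inl ⟨hxy, hb⟩⟩⟩
  push_neg at hb
  -- case: all edges of C and C' are zero edges
  by_cases hz : ∀ i j, (s(i,j) ∈ C.edges ∨ s(i,j) ∈ C'.edges) → a i + a j = 0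
  · exfalso
    have hx0 : a x = 0 := cycle_zero a C hodd (fun i j hij => hz i j (Or.inl hij)) hx
    have hy0 : a y = 0 := cycle_zero a C' hodd' (fun i j hij => hz i j (Or.inr hij)) hy
    linarith
  push_neg at hz
  obtain ⟨i, j, hij, hnz⟩ := hz
  -- the edge (i,j) is positive
  have hijpos : G.Adj i j ∧ 0 < a i + a j := by
    rcases hij with hij | hij
    · have := hadj i j (C.adj_of_mem_edges hij)
      exact ⟨this.1, lt_of_le_of_ne this.2 (Ne.symm hnz)⟩
    · have := hadj i j (C'.adj_of_mem_edges hij)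
      exact ⟨this.1, lt_of_le_of_ne this.2 (Ne.symm hnz)⟩
  obtain ⟨p, q, r, s, hpq, hrs, hqr, hsp, hz1, hz2⟩ :=
    hcomp i j x y hijpos.1 hxy hijpos.2 hb
  have hpmem : p = i ∨ p = j := by
    have : p ∈ ({i, j} : Set (Fin d)) := hpq ▸ (by simp)
    simpa using this
  have hqmem : q = i ∨ q = j := by
    have : q ∈ ({i, j} : Set (Fin d)) := hpq ▸ (by simp [Set.mem_insert_iff])
    simpa using this
  rcases hij with hij | hij
  · -- positive edge on C; p, q ∈ C.support
    have hpC : p ∈ C.support := by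
      rcases hpmem with h | h
      · exact h ▸ C.fst_mem_support_of_mem_edges hij
      · exact h ▸ C.snd_mem_support_of_mem_edges hij
    have hqC : q ∈ C.support := by
      rcases hqmem with h | h
      · exact h ▸ C.fst_mem_support_of_mem_edges hij
      · exact h ▸ C.snd_mem_support_of_mem_edges hij
    have hymem : y = r ∨ y = s := by
      have : y ∈ ({r, s} : Set (Fin d)) := by rw [hrs]; simp
      simpa using this
    rcases hymem with h | h
    · exact ⟨q, y, hqC, hy, hadj' q y (h ▸ hqr) (h ▸ hz1)⟩
    · refine ⟨p, y, hpC, hy, (hadj' y p (h ▸ hsp) ?_).symm⟩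
      rw [← h] at hz2; linarith
  · -- positive edge on C'; p, q ∈ C'.support
    have hpC : p ∈ C'.support := by
      rcases hpmem with h | h
      · exact h ▸ C'.fst_mem_support_of_mem_edges hij
      · exact h ▸ C'.snd_mem_support_of_mem_edges hij
    have hqC : q ∈ C'.support := by
      rcases hqmem with h | h
      · exact h ▸ C'.fst_mem_support_of_mem_edges hij
      · exact h ▸ C'.snd_mem_support_of_mem_edges hij
    have hxmem : x = r ∨ x = s := by
      have : x ∈ ({r, s} : Set (Fin d)) := by rw [hrs]; simp
      simpa using this
    rcases hxmem with h | h
    · exact ⟨x, q, hx, hqC, (hadj' q x (h ▸ hqr) (h ▸ hz1)).symm⟩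
    · refine ⟨x, p, hx, hpC, hadj' x p (h ▸ hsp) ?_⟩
      rw [← h] at hz2; linarith

/-- if a weighting induces a decomposition of P_G and G satisfies the
odd cycle condition, then both G_+ and G_- satisfy the odd cycle condition. -/
theorem stmt16 {d : ℕ} (G : SimpleGraph (Fin d)) (hG : G.Connected) (a : Fin d → ℝ)
    (hpos : ∃ i j, G.Adj i j ∧ 0 < a i + a j)
    (hneg : ∃ i j, G.Adj i j ∧ a i + a j < 0)
    (hcomp : ∀ i j k l, G.Adj i j → G.Adj k l → 0 < a i + a j → a k + a l < 0 →
      ∃ p q r s : Fin d, ({p, q} : Set (Fin d)) = {i, j} ∧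
        ({r, s} : Set (Fin d)) = {k, l} ∧
        G.Adj q r ∧ G.Adj s p ∧ a q + a r = 0 ∧ a s + a p = 0)
    (hG' : OddCycleCondition G) :
    OddCycleCondition (SimpleGraph.fromRel fun i j => G.Adj i j ∧ 0 ≤ a i + a j) ∧
    OddCycleCondition (SimpleGraph.fromRel fun i j => G.Adj i j ∧ a i + a j ≤ 0) := by
  refine ⟨key G a hcomp hG', ?_⟩
  have hcomp' : ∀ i j k l, G.Adj i j → G.Adj k l → 0 < (-a) i + (-a) j → (-a) k + (-a) l < 0 →
      ∃ p q r s : Fin d, ({p, q} : Set (Fin d)) = {i, j} ∧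
        ({r, s} : Set (Fin d)) = {k, l} ∧
        G.Adj q r ∧ G.Adj s p ∧ (-a) q + (-a) r = 0 ∧ (-a) s + (-a) p = 0 := by
    intro i j k l hij hkl h1 h2
    simp only [Pi.neg_apply] at h1 h2 ⊢
    obtain ⟨p, q, r, s, hpq, hrs, hqr, hsp, z1, z2⟩ :=
      hcomp k l i j hkl hij (by linarith) (by linarith)
    exact ⟨r, s, p, q, hrs, hpq, hsp, hqr, by linarith, by linarith⟩
  have hrel : (fun i j => G.Adj i j ∧ 0 ≤ (-a) i + (-a) j)
      = fun i j => G.Adj i j ∧ a i + a j ≤ 0 := by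
    funext i j
    apply propext
    apply and_congr_right'
    rw [Pi.neg_apply, Pi.neg_apply, ← neg_add, neg_nonneg]
  have := key G (-a) hcomp' hG'
  rwa [hrel] at this
end

section
/- Let C be an even cycle with vertices c_1,...,c_{2k} in a graph G carrying a decomposition weighting a: V → ℝ (edges classified by sign of the endpoint weight sum). Suppose C contains exactly one positive edge e_i = (c_i, c_{i+1}) and exactly one negative edge e_j = (c_j, c_{j+1}), and all other edges of C are zero edges. Then i ≡ j (mod 2). -/
/-!
Write `w t = a (c t) + a (c (t + 1))` for the weight of the edge `e_t`. On a cycle of even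
length the sign `(-1) ^ t` is well defined, and the alternating sum `∑ (-1) ^ t * w t`
telescopes to `0`. If all edges but `e_i` and `e_j` are zero edges, this leaves
`(-1) ^ i * w i + (-1) ^ j * w j = 0`; as `w i > 0 > w j`, the signs `(-1) ^ i` and
`(-1) ^ j` must agree.
-/

open Finset

lemma neg_one_pow_eq_neg_of_mod_two_ne {R : Type*} [Ring R] {m n : ℕ} (h : m % 2 ≠ n % 2) :
    (-1 : R) ^ m = -(-1) ^ n := by
  rw [neg_one_pow_eq_pow_mod_two, neg_one_pow_eq_pow_mod_two (n := n)]
  rcases Nat.mod_two_eq_zero_or_one m with hm | hm <;>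
    rcases Nat.mod_two_eq_zero_or_one n with hn | hn <;> simp_all

namespace ZMod

variable {n : ℕ} [NeZero n]

lemma val_add_one_mod_two_ne (hn : Even n) (t : ZMod n) : (t + 1).val % 2 ≠ t.val % 2 := by
  have h1 : 1 % n = 1 := Nat.one_mod_eq_one.mpr fun h => Nat.not_even_one (h ▸ hn)
  rw [val_add, val_one_eq_one_mod, h1, Nat.mod_mod_of_dvd _ (even_iff_two_dvd.mp hn)]
  omega

lemma neg_one_pow_val_add_one {R : Type*} [Ring R] (hn : Even n) (t : ZMod n) :
    (-1 : R) ^ (t + 1).val = -(-1) ^ t.val :=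
  neg_one_pow_eq_neg_of_mod_two_ne (val_add_one_mod_two_ne hn t)

lemma sum_neg_one_pow_val_mul_add_succ {R : Type*} [CommRing R] (hn : Even n)
    (f : ZMod n → R) : ∑ t, (-1 : R) ^ t.val * (f t + f (t + 1)) = 0 := by
  have shift : ∑ t, (-1 : R) ^ t.val * f (t + 1) = -∑ t, (-1 : R) ^ t.val * f t := by
    rw [← sum_neg_distrib]
    exact Fintype.sum_equiv (Equiv.addRight 1) _ _ fun t => by
      simp [neg_one_pow_val_add_one hn t]
  simp only [mul_add, sum_add_distrib, shift, add_neg_cancel]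

end ZMod

theorem stmt18_general {V : Type*} (a : V → ℝ) (k : ℕ) (hk : 0 < k)
    (c : ZMod (2 * k) → V)
    (i j : ZMod (2 * k)) (hij : i ≠ j)
    (hpos : 0 < a (c i) + a (c (i + 1)))
    (hneg : a (c j) + a (c (j + 1)) < 0)
    (hzero : ∀ t, t ≠ i → t ≠ j → a (c t) + a (c (t + 1)) = 0) :
    i.val % 2 = j.val % 2 := by
  have : NeZero (2 * k) := ⟨by omega⟩
  have hsum := ZMod.sum_neg_one_pow_val_mul_add_succ (even_two_mul k) fun t => a (c t)
  rw [Fintype.sum_eq_add i j hij fun t ⟨hti, htj⟩ => by simp [hzero t hti htj]] at hsum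
  by_contra hparity
  rw [neg_one_pow_eq_neg_of_mod_two_ne (Ne.symm hparity)] at hsum
  have hsign : (-1 : ℝ) ^ i.val ≠ 0 := pow_ne_zero _ (by norm_num)
  have hprod : (-1 : ℝ) ^ i.val * (a (c i) + a (c (i + 1)) - (a (c j) + a (c (j + 1)))) = 0 := by
    linear_combination hsum
  linarith [(mul_eq_zero.mp hprod).resolve_left hsign]

/-- an even cycle with exactly one positive edge, exactly one negative
edge, and all other edges zero, has its positive and negative edges at positions of
the same parity. -/
theorem stmt18 {V : Type*} (G : SimpleGraph V) (a : V → ℝ) (k : ℕ) (hk : 0 < k)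
    (c : ZMod (2 * k) → V) (hinj : Function.Injective c)
    (hadj : ∀ t, G.Adj (c t) (c (t + 1)))
    (i j : ZMod (2 * k)) (hij : i ≠ j)
    (hpos : 0 < a (c i) + a (c (i + 1)))
    (hneg : a (c j) + a (c (j + 1)) < 0)
    (hzero : ∀ t, t ≠ i → t ≠ j → a (c t) + a (c (t + 1)) = 0) :
    i.val % 2 = j.val % 2 :=
  stmt18_general a k hk c i j hij hpos hneg hzero
end
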